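/- At the incoming pipe carrying the maximal entropy, the entropy mix is non-increasing in that pipe's Lax parameter: in the setting of the entropy-mix derivative formula, assume additionally that every incoming mass flux is negative (q̄_j < 0 for j = 1, …, m), that the state of pipe j₀ is subsonic (so ū_{j₀} + c̄_{j₀} > 0), and that s̄_{j₀} ≥ s̄_j for all j = 1, …, m. Then the derivative of the entropy mix g(σ) (the entropy mix s* with pipe j₀'s state moved along its 3-Lax curve, all other pipes fixed at base) satisfies g′(p̄_{j₀}) ≤ 0. -/

import Mathlib

/-!
Write `g = (A Q S + B) / (A Q + C)`, where `Q` and `S` are the mass flux and the entropy of pipe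
`j₀` along its Lax curve and `B`, `C` collect the other pipes. Both branches of `φ` leave the base
point with the slope `ρ̄ / (γ p̄)` of the isentrope `σ ↦ ρ̄ (σ / p̄)^(1/γ)`, so the entropy is
stationary there, `S'(p̄) = 0`. Hence `g'(p̄) = A Q'(p̄) (s̄_{j₀} C - B) / (A q̄_{j₀} + C)²`. Here
`Q'(p̄) = ρ̄ (ū + c̄) / (γ p̄) ≥ 0` by subsonicity, while
`s̄_{j₀} C - B = ∑_{j ≠ j₀} a_j q̄_j (s̄_{j₀} - s̄_j) ≤ 0` since the fluxes are negative.
-/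

/-- The velocity function `ψ` of the Lax-curve parametrisation. -/
noncomputable def laxPsi (γ ρ p : ℝ) (σ : ℝ) : ℝ :=
  if σ ≤ p then
    (2 * Real.sqrt (γ * p / ρ) / (γ - 1)) * ((σ / p) ^ ((γ - 1) / (2 * γ)) - 1)
  else
    (σ - p) * Real.sqrt ((1 - (γ - 1) / (γ + 1)) / (ρ * (σ + ((γ - 1) / (γ + 1)) * p)))

/-- The density function `φ` of the Lax-curve parametrisation. -/
noncomputable def laxPhi (γ ρ p : ℝ) (σ : ℝ) : ℝ :=
  if σ ≤ p then
    ρ * (σ / p) ^ (1 / γ)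
  else
    ρ * (σ + ((γ - 1) / (γ + 1)) * p) / (((γ - 1) / (γ + 1)) * σ + p)

open Set

lemma laxPsi_self (γ ρ : ℝ) {p : ℝ} (hp : p ≠ 0) : laxPsi γ ρ p p = 0 := by
  simp [laxPsi, div_self hp]

lemma laxPhi_self (γ ρ : ℝ) {p : ℝ} (hp : p ≠ 0) : laxPhi γ ρ p p = ρ := by
  simp [laxPhi, div_self hp]

theorem HasDerivAt.ite_le {f g : ℝ → ℝ} {f' p : ℝ} (hf : HasDerivAt f f' p)
    (hg : HasDerivAt g f' p) (hfg : f p = g p) :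
    HasDerivAt (fun x => if x ≤ p then f x else g x) f' p := by
  have hl : HasDerivWithinAt (fun x => if x ≤ p then f x else g x) f' (Iic p) p :=
    hf.hasDerivWithinAt.congr (fun x hx => if_pos hx) (if_pos le_rfl)
  have hr : HasDerivWithinAt (fun x => if x ≤ p then f x else g x) f' (Ici p) p := by
    refine hg.hasDerivWithinAt.congr (fun x hx => ?_) (by simp [hfg])
    split_ifs with h
    · rw [le_antisymm h hx, hfg]
    · rfl
  simpa only [Iic_union_Ici, hasDerivWithinAt_univ] using hl.union hr

section LaxCurve

variable {γ ρ p : ℝ} (hγ : 1 < γ) (hρ : 0 < ρ) (hp : 0 < p)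
include hγ hρ hp

lemma hasDerivAt_laxPsi :
    HasDerivAt (laxPsi γ ρ p) (√(γ * p / ρ) / (γ * p)) p := by
  have hγ0 : 0 < γ := by linarith
  have hγ1 : 0 < γ - 1 := by linarith
  have hγ2 : 0 < γ + 1 := by linarith
  set μ2 := (γ - 1) / (γ + 1) with hμ2
  have hμ2pos : 0 < μ2 := div_pos hγ1 hγ2
  have hμ2' : μ2 < 1 := (div_lt_one hγ2).mpr (by linarith)
  have hrarefaction : HasDerivAt
      (fun σ => 2 * √(γ * p / ρ) / (γ - 1) * ((σ / p) ^ ((γ - 1) / (2 * γ)) - 1))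
      (√(γ * p / ρ) / (γ * p)) p := by
    have h := (((hasDerivAt_id' p).div_const p).rpow_const (p := (γ - 1) / (2 * γ))
      (Or.inl (by simp [hp.ne']))).sub_const 1 |>.const_mul (2 * √(γ * p / ρ) / (γ - 1))
    refine h.congr_deriv ?_
    rw [div_self hp.ne', Real.one_rpow]
    field_simp
  have hslope : (1 - μ2) / (ρ * (p + μ2 * p)) = (γ * p / ρ) / (γ * p) ^ 2 := by
    rw [hμ2]; field_simp; ring
  have hshock : HasDerivAt (fun σ => (σ - p) * √((1 - μ2) / (ρ * (σ + μ2 * p))))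
      (√(γ * p / ρ) / (γ * p)) p := by
    have hinner := (hasDerivAt_const p (1 - μ2)).div
      (((hasDerivAt_id' p).add_const (μ2 * p)).const_mul ρ) (by positivity)
    have h := ((hasDerivAt_id' p).sub_const p).mul
      (hinner.sqrt (div_pos (by linarith) (by positivity)).ne')
    refine h.congr_deriv ?_
    simp only [Pi.div_apply, sub_self, zero_mul, add_zero, one_mul]
    rw [hslope, Real.sqrt_div' _ (by positivity), Real.sqrt_sq (by positivity)]
  exact hrarefaction.ite_le hshock (by simp [hp.ne'])

lemma hasDerivAt_laxPhi : HasDerivAt (laxPhi γ ρ p) (ρ / (γ * p)) p := by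
  have hγ0 : 0 < γ := by linarith
  have hγ1 : 0 < γ - 1 := by linarith
  have hγ2 : 0 < γ + 1 := by linarith
  set μ2 := (γ - 1) / (γ + 1) with hμ2
  have hμ2pos : 0 < μ2 := div_pos hγ1 hγ2
  have hrarefaction : HasDerivAt (fun σ => ρ * (σ / p) ^ (1 / γ)) (ρ / (γ * p)) p := by
    have h := (((hasDerivAt_id' p).div_const p).rpow_const (p := 1 / γ)
      (Or.inl (by simp [hp.ne']))).const_mul ρ
    refine h.congr_deriv ?_
    rw [div_self hp.ne', Real.one_rpow]
    field_simp
  have hshock : HasDerivAt (fun σ => ρ * (σ + μ2 * p) / (μ2 * σ + p)) (ρ / (γ * p)) p := by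
    have h := (((hasDerivAt_id' p).add_const (μ2 * p)).const_mul ρ).div
      (((hasDerivAt_id' p).const_mul μ2).add_const p) (by positivity)
    refine h.congr_deriv ?_
    rw [hμ2]
    field_simp
    ring
  refine hrarefaction.ite_le hshock ?_
  rw [div_self hp.ne', Real.one_rpow, mul_one, eq_div_iff (by positivity)]
  ring

lemma hasDerivAt_laxFlux (u : ℝ) :
    HasDerivAt (fun σ => laxPhi γ ρ p σ * (u + laxPsi γ ρ p σ))
      (ρ / (γ * p) * (u + √(γ * p / ρ))) p := by
  refine ((hasDerivAt_laxPhi hγ hρ hp).mul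
    ((hasDerivAt_laxPsi hγ hρ hp).const_add u)).congr_deriv ?_
  rw [laxPhi_self γ ρ hp.ne', laxPsi_self γ ρ hp.ne']
  ring

lemma hasDerivAt_laxEntropy (cv : ℝ) :
    HasDerivAt (fun σ => cv * Real.log (σ / laxPhi γ ρ p σ ^ γ)) 0 p := by
  have hφ : laxPhi γ ρ p p = ρ := laxPhi_self γ ρ hp.ne'
  have hpow := (hasDerivAt_laxPhi hγ hρ hp).rpow_const (p := γ)
    (Or.inl (by rw [hφ]; exact hρ.ne'))
  have h := (((hasDerivAt_id' p).div hpow (by rw [hφ]; positivity)).log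
    (by simp only [Pi.div_apply]; rw [hφ]; positivity)).const_mul cv
  refine h.congr_deriv ?_
  have hργ : ρ ^ γ = ρ ^ (γ - 1) * ρ := by
    rw [← Real.rpow_add_one hρ.ne', sub_add_cancel]
  rw [hφ, hργ]
  field_simp
  ring

end LaxCurve

lemma hasDerivAt_mix {Q S : ℝ → ℝ} {Q' x A B C : ℝ} (hQ : HasDerivAt Q Q' x)
    (hS : HasDerivAt S 0 x) (hD : A * Q x + C ≠ 0) :
    HasDerivAt (fun σ => (A * Q σ * S σ + B) / (A * Q σ + C))
      (A * Q' * (S x * C - B) / (A * Q x + C) ^ 2) x := by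
  refine ((((hQ.const_mul A).mul hS).add_const B).div
    ((hQ.const_mul A).add_const C) hD).congr_deriv ?_
  simp only [Pi.mul_apply]
  field_simp
  ring

lemma mul_sum_le_sum_mul_of_nonpos {ι R : Type*} [CommRing R] [PartialOrder R] [IsOrderedRing R]
    (s : Finset ι) {w t : ι → R} {t₀ : R} (hw : ∀ j ∈ s, w j ≤ 0) (ht : ∀ j ∈ s, t j ≤ t₀) :
    t₀ * ∑ j ∈ s, w j ≤ ∑ j ∈ s, w j * t j := by
  rw [Finset.mul_sum]
  exact Finset.sum_le_sum fun j hj => by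
    rw [mul_comm]; exact mul_le_mul_of_nonpos_left (ht j hj) (hw j hj)

theorem entropy_mix_deriv_nonpos_at_max_entropy_pipe_general
    (γ cv : ℝ) (hγ : 1 < γ)
    (m : ℕ)
    (a ρ q ub pb cb sb : Fin m → ℝ)
    (ha : ∀ j, 0 < a j) (hρ : ∀ j, 0 < ρ j)
    (hub : ∀ j, ub j = q j / ρ j)
    (hppos : ∀ j, 0 < pb j)
    (hcb : ∀ j, cb j = Real.sqrt (γ * pb j / ρ j))
    (hsb : ∀ j, sb j = cv * Real.log (pb j / ρ j ^ γ))
    (hq : ∀ j, q j < 0)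
    (j₀ : Fin m)
    (hsub : |ub j₀| < cb j₀)
    (hmax : ∀ j, sb j ≤ sb j₀) :
    deriv
      (fun σ : ℝ =>
        (a j₀ * (laxPhi γ (ρ j₀) (pb j₀) σ * (ub j₀ + laxPsi γ (ρ j₀) (pb j₀) σ)) *
              (cv * Real.log (σ / laxPhi γ (ρ j₀) (pb j₀) σ ^ γ)) +
            ∑ j ∈ Finset.univ.erase j₀, a j * q j * sb j) /
          (a j₀ * (laxPhi γ (ρ j₀) (pb j₀) σ * (ub j₀ + laxPsi γ (ρ j₀) (pb j₀) σ)) +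
            ∑ j ∈ Finset.univ.erase j₀, a j * q j))
      (pb j₀) ≤ 0 := by
  have hp := hppos j₀
  have hQ := hasDerivAt_laxFlux hγ (hρ j₀) hp (ub j₀)
  have hS := hasDerivAt_laxEntropy hγ (hρ j₀) hp cv
  have hQ₀ :
      laxPhi γ (ρ j₀) (pb j₀) (pb j₀) * (ub j₀ + laxPsi γ (ρ j₀) (pb j₀) (pb j₀)) = q j₀ := by
    rw [laxPhi_self _ _ hp.ne', laxPsi_self _ _ hp.ne', add_zero, hub, mul_div_cancel₀ _ (hρ j₀).ne']
  have hS₀ : cv * Real.log (pb j₀ / laxPhi γ (ρ j₀) (pb j₀) (pb j₀) ^ γ) = sb j₀ := by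
    rw [laxPhi_self _ _ hp.ne', hsb]
  have hD : a j₀ * q j₀ + ∑ j ∈ Finset.univ.erase j₀, a j * q j < 0 := by
    rw [Finset.add_sum_erase _ (fun j => a j * q j) (Finset.mem_univ j₀)]
    exact Finset.sum_neg (fun j _ => mul_neg_of_pos_of_neg (ha j) (hq j)) ⟨j₀, Finset.mem_univ _⟩
  rw [(hasDerivAt_mix hQ hS (by rw [hQ₀]; exact hD.ne)).deriv, hQ₀, hS₀]
  refine div_nonpos_of_nonpos_of_nonneg (mul_nonpos_of_nonneg_of_nonpos ?_ ?_) (sq_nonneg _)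
  · have hc : 0 ≤ ub j₀ + √(γ * pb j₀ / ρ j₀) := by
      rw [← hcb]; linarith [(abs_lt.mp hsub).1]
    exact mul_nonneg (ha j₀).le (mul_nonneg (div_pos (hρ j₀) (mul_pos (by linarith) hp)).le hc)
  · exact sub_nonpos.mpr (mul_sum_le_sum_mul_of_nonpos _
      (fun j _ => (mul_neg_of_pos_of_neg (ha j) (hq j)).le) (fun j _ => hmax j))

/-- At the incoming pipe carrying the maximal entropy, the entropy mix is
non-increasing in that pipe's Lax parameter: if all incoming mass fluxes are negative,
the state of pipe `j₀` is subsonic, and `s̄_{j₀} ≥ s̄_j` for all `j`, then the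
derivative at the base pressure of the entropy mix `g(σ)` (pipe `j₀`'s state moved
along its 3-Lax curve, all other pipes held at base) satisfies `g′(p̄_{j₀}) ≤ 0`. -/
theorem entropy_mix_deriv_nonpos_at_max_entropy_pipe
    (γ cv : ℝ) (hγ : 1 < γ) (hcv : 0 < cv)
    (m : ℕ) (hm : 1 ≤ m)
    (a ρ q E ub pb cb sb : Fin m → ℝ)
    (ha : ∀ j, 0 < a j) (hρ : ∀ j, 0 < ρ j)
    (hub : ∀ j, ub j = q j / ρ j)
    (hpb : ∀ j, pb j = (γ - 1) * (E j - (q j) ^ 2 / (2 * ρ j)))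
    (hppos : ∀ j, 0 < pb j)
    (hcb : ∀ j, cb j = Real.sqrt (γ * pb j / ρ j))
    (hsb : ∀ j, sb j = cv * Real.log (pb j / ρ j ^ γ))
    (hq : ∀ j, q j < 0)
    (j₀ : Fin m)
    (hsub : |ub j₀| < cb j₀)
    (hmax : ∀ j, sb j ≤ sb j₀) :
    deriv
      (fun σ : ℝ =>
        (a j₀ * (laxPhi γ (ρ j₀) (pb j₀) σ * (ub j₀ + laxPsi γ (ρ j₀) (pb j₀) σ)) *
              (cv * Real.log (σ / laxPhi γ (ρ j₀) (pb j₀) σ ^ γ)) +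
            ∑ j ∈ Finset.univ.erase j₀, a j * q j * sb j) /
          (a j₀ * (laxPhi γ (ρ j₀) (pb j₀) σ * (ub j₀ + laxPsi γ (ρ j₀) (pb j₀) σ)) +
            ∑ j ∈ Finset.univ.erase j₀, a j * q j))
      (pb j₀) ≤ 0 :=
  entropy_mix_deriv_nonpos_at_max_entropy_pipe_general γ cv hγ m a ρ q ub pb cb sb ha hρ hub hppos
    hcb hsb hq j₀ hsub hmax
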